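/- (Lower bound on effective capacity, eq. (13)) Let (Ω, ℱ, μ) be a probability space and let S, I : Ω → ℝ be independent nonnegative random variables with I integrable. Let a > 0, θ > 0, and β = θ·T_f·BW·log₂(e) with T_f > 0 and BW > 0 such that 0 < β ≤ 1. Set EC(θ) = −(1/θ)·log E[(1 + S/(I + a))^(−β)] and EC_LB(θ) = −(1/θ)·log E[(1 + S/(E[I] + a))^(−β)]. Then EC_LB(θ) ≤ EC(θ). -/

import Mathlib

/-!
Independence makes the joint law of `(S, I)` the product of the marginals, so by Fubini
`E[(1 + S/(I + a))^(-β)]` is the `S`-average of `i ↦ E[(1 + s/(I + a))^(-β)]`. For `s ≥ 0`,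
`(1 + s/(x + a))^(-β) = ((x + a)/(x + a + s))^β` is a nondecreasing concave function (`β ≤ 1`) of
the concave function `(x + a)/(x + a + s) = 1 - s/(x + a + s)`, so Jensen's inequality in `I`
bounds each fiber by its value at `E[I]`. Finally `-(1/θ) log` is antitone.
-/

open MeasureTheory ProbabilityTheory Set Function

theorem ConcaveOn.comp_of_mapsTo {E : Type*} [AddCommMonoid E] [Module ℝ E] {s : Set E}
    {t : Set ℝ} {f : E → ℝ} {g : ℝ → ℝ} (hg : ConcaveOn ℝ t g) (hf : ConcaveOn ℝ s f)
    (hg_mono : MonotoneOn g t) (hst : MapsTo f s t) : ConcaveOn ℝ s (g ∘ f) :=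
  ⟨hf.1, fun _ hx _ hy _ _ ha hb hab =>
    (hg.2 (hst hx) (hst hy) ha hb hab).trans <|
      hg_mono (hg.1 (hst hx) (hst hy) ha hb hab) (hst (hf.1 hx hy ha hb hab))
        (hf.2 hx hy ha hb hab)⟩

theorem concaveOn_add_div_add {a b : ℝ} (hab : a ≤ b) :
    ConcaveOn ℝ (Ioi (-b)) fun x => (x + a) / (x + b) := by
  have hinv : ConvexOn ℝ (Ioi (-b)) fun x => (x + b)⁻¹ := by
    have hset : (fun z => b + z) ⁻¹' Ioi 0 = Ioi (-b) := by
      ext x; simp [neg_lt_iff_pos_add']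
    have := (convexOn_zpow (𝕜 := ℝ) (-1)).translate_left b
    rw [hset] at this
    exact this.congr fun x _ => by simp
  refine ((concaveOn_const 1 (convex_Ioi _)).add (hinv.smul (sub_nonneg.2 hab)).neg).congr ?_
  intro x hx
  have : x + b ≠ 0 := by simp only [mem_Ioi] at hx; linarith
  simp only [Pi.add_apply, Pi.neg_apply, smul_eq_mul]
  field_simp
  ring

theorem one_add_div_rpow_neg_eq {a c x β : ℝ} (hc : 0 ≤ c) (hxa : 0 < x + a) :
    (1 + c / (x + a)) ^ (-β) = ((x + a) / (x + (a + c))) ^ β := by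
  rw [Real.rpow_neg (by positivity), ← Real.inv_rpow (by positivity), one_add_div hxa.ne',
    inv_div, add_assoc]

theorem concaveOn_one_add_div_rpow_neg {a c β : ℝ} (ha : 0 < a) (hc : 0 ≤ c) (hβ₀ : 0 ≤ β)
    (hβ₁ : β ≤ 1) : ConcaveOn ℝ (Ici 0) fun x => (1 + c / (x + a)) ^ (-β) := by
  have hquot : ConcaveOn ℝ (Ici 0) fun x => (x + a) / (x + (a + c)) :=
    (concaveOn_add_div_add (by linarith)).subset
      (fun x (hx : 0 ≤ x) => show -(a + c) < x by linarith) (convex_Ici 0)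
  have hmaps : MapsTo (fun x => (x + a) / (x + (a + c))) (Ici 0) (Ici 0) :=
    fun x (hx : 0 ≤ x) => show 0 ≤ (x + a) / (x + (a + c)) by positivity
  refine ((Real.concaveOn_rpow hβ₀ hβ₁).comp_of_mapsTo hquot
    (Real.monotoneOn_rpow_Ici_of_exponent_nonneg hβ₀) hmaps).congr fun x (hx : 0 ≤ x) => ?_
  exact (one_add_div_rpow_neg_eq hc (by linarith)).symm

theorem continuousOn_one_add_div_rpow_neg {a c β : ℝ} (ha : 0 < a) (hc : 0 ≤ c) :
    ContinuousOn (fun x => (1 + c / (x + a)) ^ (-β)) (Ici 0) := by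
  refine ContinuousOn.rpow_const ?_ fun x (hx : 0 ≤ x) => Or.inl (by positivity)
  exact continuousOn_const.add <| continuousOn_const.div (by fun_prop)
    fun x (hx : 0 ≤ x) => by positivity

theorem one_add_div_rpow_neg_mem_Ioc {a c x β : ℝ} (ha : 0 < a) (hc : 0 ≤ c) (hx : 0 ≤ x)
    (hβ : 0 ≤ β) : (1 + c / (x + a)) ^ (-β) ∈ Ioc 0 1 :=
  ⟨by positivity, Real.rpow_le_one_of_one_le_of_nonpos
    (le_add_of_nonneg_right (by positivity)) (neg_nonpos.2 hβ)⟩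

theorem integral_pos_of_forall_pos {α : Type*} [MeasurableSpace α] {μ : Measure α} [NeZero μ]
    {f : α → ℝ} (hf : ∀ x, 0 < f x) (hfi : Integrable f μ) : 0 < ∫ x, f x ∂μ := by
  rw [integral_pos_iff_support_of_nonneg (fun x => (hf x).le) hfi,
    support_eq_univ fun x => (hf x).ne']
  exact Measure.measure_univ_pos.2 (NeZero.ne μ)

theorem ProbabilityTheory.IndepFun.integral_comp_le_integral_comp_integral
    {Ω α E : Type*} [MeasurableSpace Ω] {μ : Measure Ω} [IsProbabilityMeasure μ]
    [MeasurableSpace α] [NormedAddCommGroup E] [NormedSpace ℝ E] [CompleteSpace E]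
    [MeasurableSpace E] [BorelSpace E] {X : Ω → α} {Y : Ω → E} {f : α → E → ℝ}
    {s : Set α} {t : Set E}
    (hXY : IndepFun X Y μ) (hX : AEMeasurable X μ) (hY : AEMeasurable Y μ)
    (hf : Measurable (uncurry f)) (hs : MeasurableSet s) (hXs : ∀ᵐ ω ∂μ, X ω ∈ s)
    (ht : IsClosed t) (hYt : ∀ᵐ ω ∂μ, Y ω ∈ t) (hYi : Integrable Y μ)
    (hf_concave : ∀ x ∈ s, ConcaveOn ℝ t (f x)) (hf_cont : ∀ x ∈ s, ContinuousOn (f x) t)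
    (hfXY : Integrable (fun ω => f (X ω) (Y ω)) μ)
    (hfX : Integrable (fun ω => f (X ω) (∫ ω', Y ω' ∂μ)) μ) :
    ∫ ω, f (X ω) (Y ω) ∂μ ≤ ∫ ω, f (X ω) (∫ ω', Y ω' ∂μ) ∂μ := by
  set m := ∫ ω', Y ω' ∂μ
  have hmap : μ.map (fun ω => (X ω, Y ω)) = (μ.map X).prod (μ.map Y) :=
    (indepFun_iff_map_prod_eq_prod_map_map hX hY).1 hXY
  have hprod : Integrable (uncurry f) ((μ.map X).prod (μ.map Y)) := by
    rw [← hmap]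
    exact (integrable_map_measure hf.aestronglyMeasurable (hX.prodMk hY)).2 hfXY
  have hfm : Measurable fun x => f x m := hf.comp measurable_prodMk_right
  have hfiber : ∀ᵐ x ∂μ.map X, ∫ y, f x y ∂μ.map Y ≤ f x m := by
    filter_upwards [hprod.prod_right_ae, (ae_map_iff hX hs).2 hXs] with x hx hxs
    have hfx : Measurable (f x) := hf.comp measurable_prodMk_left
    rw [integral_map hY hfx.aestronglyMeasurable]
    exact (hf_concave x hxs).le_map_integral (hf_cont x hxs) ht hYt hYi
      ((integrable_map_measure hfx.aestronglyMeasurable hY).1 hx)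
  calc ∫ ω, f (X ω) (Y ω) ∂μ = ∫ p, uncurry f p ∂(μ.map X).prod (μ.map Y) := by
        rw [← hmap, integral_map (hX.prodMk hY) hf.aestronglyMeasurable]; rfl
    _ = ∫ x, ∫ y, f x y ∂μ.map Y ∂μ.map X := integral_prod _ hprod
    _ ≤ ∫ x, f x m ∂μ.map X :=
        integral_mono_ae hprod.integral_prod_left
          ((integrable_map_measure hfm.aestronglyMeasurable hX).2 hfX) hfiber
    _ = ∫ ω, f (X ω) m ∂μ := integral_map hX hfm.aestronglyMeasurable

theorem ec_lower_bound_general {Ω : Type*} [MeasurableSpace Ω] (μ : Measure Ω)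
    [IsProbabilityMeasure μ] (S I : Ω → ℝ) (hS : Measurable S) (hI : Measurable I)
    (hindep : ProbabilityTheory.IndepFun S I μ)
    (hSnn : ∀ ω, 0 ≤ S ω) (hInn : ∀ ω, 0 ≤ I ω) (hIint : Integrable I μ)
    (a θ β : ℝ) (ha : 0 < a) (hθ : 0 < θ)
    (hβ0 : 0 < β) (hβ1 : β ≤ 1) :
    -(1 / θ) * Real.log (∫ ω, (1 + S ω / ((∫ ω', I ω' ∂μ) + a)) ^ (-β) ∂μ)
      ≤ -(1 / θ) * Real.log (∫ ω, (1 + S ω / (I ω + a)) ^ (-β) ∂μ) := by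
  have hmeas : Measurable (uncurry fun s i : ℝ => (1 + s / (i + a)) ^ (-β)) := by fun_prop
  have hintegrable : ∀ J : Ω → ℝ, Measurable J → (∀ ω, 0 ≤ J ω) →
      Integrable (fun ω => (1 + S ω / (J ω + a)) ^ (-β)) μ := fun J hJ hJnn =>
    .of_bound (hmeas.comp (hS.prodMk hJ)).aestronglyMeasurable 1 <| .of_forall fun ω => by
      obtain ⟨hpos, hle⟩ := one_add_div_rpow_neg_mem_Ioc ha (hSnn ω) (hJnn ω) hβ0.le
      rwa [Real.norm_of_nonneg hpos.le]
  have hmean_nn : 0 ≤ ∫ ω, I ω ∂μ := integral_nonneg hInn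
  have hjensen := hindep.integral_comp_le_integral_comp_integral hS.aemeasurable hI.aemeasurable
    hmeas measurableSet_Ici (.of_forall hSnn) isClosed_Ici (.of_forall hInn) hIint
    (fun c hc => concaveOn_one_add_div_rpow_neg ha hc hβ0.le hβ1)
    (fun c hc => continuousOn_one_add_div_rpow_neg ha hc)
    (hintegrable I hI hInn) (hintegrable _ measurable_const fun _ => hmean_nn)
  have hpos := integral_pos_of_forall_pos
    (fun ω => (one_add_div_rpow_neg_mem_Ioc ha (hSnn ω) (hInn ω) hβ0.le).1)
    (hintegrable I hI hInn)
  exact mul_le_mul_of_nonpos_left (Real.log_le_log hpos hjensen)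
    (neg_nonpos.2 (one_div_pos.2 hθ).le)

/-- Lower bound on effective capacity (eq. (13)): EC_LB(θ) ≤ EC(θ). -/
theorem ec_lower_bound {Ω : Type*} [MeasurableSpace Ω] (μ : Measure Ω)
    [IsProbabilityMeasure μ] (S I : Ω → ℝ) (hS : Measurable S) (hI : Measurable I)
    (hindep : ProbabilityTheory.IndepFun S I μ)
    (hSnn : ∀ ω, 0 ≤ S ω) (hInn : ∀ ω, 0 ≤ I ω) (hIint : Integrable I μ)
    (a θ Tf BW β : ℝ) (ha : 0 < a) (hθ : 0 < θ) (hTf : 0 < Tf) (hBW : 0 < BW)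
    (hβdef : β = θ * Tf * BW * Real.logb 2 (Real.exp 1))
    (hβ0 : 0 < β) (hβ1 : β ≤ 1) :
    -(1 / θ) * Real.log (∫ ω, (1 + S ω / ((∫ ω', I ω' ∂μ) + a)) ^ (-β) ∂μ)
      ≤ -(1 / θ) * Real.log (∫ ω, (1 + S ω / (I ω + a)) ^ (-β) ∂μ) :=
  ec_lower_bound_general μ S I hS hI hindep hSnn hInn hIint a θ β ha hθ hβ0 hβ1
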